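/- arXiv:2506.23870 — 2 statements merged into one kernel-verified Lean document; each statement's English description precedes it below -/
import Mathlib

section
/- Restricted strong convexity of the limiting negative log-partial likelihood: for all bounded measurable f, f_1 : 𝒳 → ℝ, e^{−‖f−f_0‖_∞} e^{−‖f‖_∞} Λ q_1 ‖f_1 − P_X(f_1)‖_{L_2(P_X)}² ≤ D²ℓ_⋆(f)(f_1,f_1) ≤ e^{‖f−f_0‖_∞} e^{‖f‖_∞} Λ ‖f_1‖_{L_2(P_X)}², where D²ℓ_⋆(f)(f_1,f_1) = ∫_0^1 ( D²S(f,t)(f_1,f_1)/S(f,t) − (DS(f,t)(f_1)/S(f,t))² ) S(f_0,t) λ_0(t) dt is the second-order Gateaux derivative of ℓ_⋆ at f in direction (f_1,f_1), with D^mS(f,t)(f_1,…,f_m) = ∫_𝒳 q(x,t)e^{f(x)}∏_{j=1}^m f_j(x) dP_X(x), and P_X(f_1) := ∫_𝒳 f_1 dP_X. -/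
open MeasureTheory

/-- Bounded measurable real-valued functions (the class `𝓑(𝒳)`). -/
def BddMeas {𝒳 : Type*} [MeasurableSpace 𝒳] (f : 𝒳 → ℝ) : Prop :=
  Measurable f ∧ ∃ M : ℝ, ∀ x, |f x| ≤ M

/-- `S(f,t) := ∫_𝒳 q(x,t) e^{f(x)} dP_X(x)`. -/
noncomputable def survS {𝒳 : Type*} [MeasurableSpace 𝒳] (P : Measure 𝒳)
    (q : 𝒳 → ℝ → ℝ) (f : 𝒳 → ℝ) (t : ℝ) : ℝ :=
  ∫ x, q x t * Real.exp (f x) ∂P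

/-- `DS(f,t)(f₁) := ∫_𝒳 q(x,t) e^{f(x)} f₁(x) dP_X(x)`. -/
noncomputable def survDS {𝒳 : Type*} [MeasurableSpace 𝒳] (P : Measure 𝒳)
    (q : 𝒳 → ℝ → ℝ) (f f₁ : 𝒳 → ℝ) (t : ℝ) : ℝ :=
  ∫ x, q x t * Real.exp (f x) * f₁ x ∂P

/-- `D²S(f,t)(f₁,f₁) := ∫_𝒳 q(x,t) e^{f(x)} f₁(x)² dP_X(x)`. -/
noncomputable def survD2S {𝒳 : Type*} [MeasurableSpace 𝒳] (P : Measure 𝒳)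
    (q : 𝒳 → ℝ → ℝ) (f f₁ : 𝒳 → ℝ) (t : ℝ) : ℝ :=
  ∫ x, q x t * Real.exp (f x) * (f₁ x) ^ 2 ∂P

/-- The second-order Gateaux derivative of `ℓ_⋆` at `f` in direction `(f₁,f₁)`:
`D²ℓ_⋆(f)(f₁,f₁) = ∫_0^1 (D²S(f,t)(f₁,f₁)/S(f,t) − (DS(f,t)(f₁)/S(f,t))²) S(f_0,t) λ_0(t) dt`. -/
noncomputable def D2lstar {𝒳 : Type*} [MeasurableSpace 𝒳] (P : Measure 𝒳)
    (q : 𝒳 → ℝ → ℝ) (lam0 : ℝ → ℝ) (f0 f f₁ : 𝒳 → ℝ) : ℝ :=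
  ∫ t in Set.Icc (0 : ℝ) 1,
    (survD2S P q f f₁ t / survS P q f t - (survDS P q f f₁ t / survS P q f t) ^ 2) *
      survS P q f0 t * lam0 t

/-- Helper: a bounded measurable function is integrable w.r.t. a finite measure. -/
lemma integrable_of_bdd_helper {𝒳 : Type*} [MeasurableSpace 𝒳] (P : Measure 𝒳)
    [IsFiniteMeasure P] {g : 𝒳 → ℝ} (hg : Measurable g) {C : ℝ} (hC : ∀ x, |g x| ≤ C) :
    Integrable g P :=
  (integrable_const C).mono' hg.aestronglyMeasurable
    (Filter.Eventually.of_forall fun x => by simpa [Real.norm_eq_abs] using hC x)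

/-- restricted strong convexity of `ℓ_⋆`: for all bounded measurable
`f, f₁ : 𝒳 → ℝ`, with `M₁ = ‖f − f_0‖_∞` and `M₂ = ‖f‖_∞`,
`e^{−M₁} e^{−M₂} Λ q_1 ‖f₁ − P_X(f₁)‖²_{L₂(P_X)} ≤ D²ℓ_⋆(f)(f₁,f₁)
  ≤ e^{M₁} e^{M₂} Λ ‖f₁‖²_{L₂(P_X)}`. -/
theorem restricted_strong_convexity_lstar
    (𝒳 : Type*) [MeasurableSpace 𝒳]
    (P : Measure 𝒳) [IsProbabilityMeasure P]
    (μ : Measure (𝒳 × ℝ × ℝ)) [IsProbabilityMeasure μ]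
    (hμfst : μ.map Prod.fst = P)
    (hμpos : μ {ω | 0 < ω.2.1 ∧ 0 < ω.2.2} = 1)
    (FS FC : 𝒳 → ℝ → ℝ)
    (hcondind : ∀ B : Set 𝒳, MeasurableSet B → ∀ t u : ℝ,
      (μ {ω | ω.1 ∈ B ∧ t < ω.2.1 ∧ u < ω.2.2}).toReal = ∫ x in B, FS x t * FC x u ∂P)
    (q : 𝒳 → ℝ → ℝ)
    (hqmeas : ∀ t, Measurable fun x => q x t)
    (hq01 : ∀ x t, q x t ∈ Set.Icc (0 : ℝ) 1)
    (hq : ∀ B : Set 𝒳, MeasurableSet B → ∀ t : ℝ,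
      (μ {ω | ω.1 ∈ B ∧ t ≤ min ω.2.1 ω.2.2}).toReal = ∫ x in B, q x t ∂P)
    (q1 : ℝ) (hq1pos : 0 < q1) (hq1 : ∀ x, q1 ≤ q x 1)
    (lam0 : ℝ → ℝ) (hlam0meas : Measurable lam0)
    (hlam0nonneg : ∀ t ∈ Set.Icc (0 : ℝ) 1, 0 ≤ lam0 t)
    (hlam0int : IntegrableOn lam0 (Set.Icc (0 : ℝ) 1))
    (Lam : ℝ) (hLam : Lam = ∫ t in Set.Icc (0 : ℝ) 1, lam0 t)
    (f0 : 𝒳 → ℝ) (hf0 : BddMeas f0) (hf0cent : ∫ x, f0 x ∂P = 0)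
    (hhazard : ∀ᵐ x ∂P, ∀ t ∈ Set.Icc (0 : ℝ) 1,
      FS x t = Real.exp (-(Real.exp (f0 x)) * ∫ s in Set.Ioc (0 : ℝ) t, lam0 s))
    (f f₁ : 𝒳 → ℝ) (hf : BddMeas f) (hf₁ : BddMeas f₁)
    (M₁ : ℝ) (hM₁ : IsLUB (Set.range fun x => |f x - f0 x|) M₁)
    (M₂ : ℝ) (hM₂ : IsLUB (Set.range fun x => |f x|) M₂) :
    Real.exp (-M₁) * Real.exp (-M₂) * Lam * q1 *
        (∫ x, (f₁ x - ∫ y, f₁ y ∂P) ^ 2 ∂P)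
      ≤ D2lstar P q lam0 f0 f f₁ ∧
    D2lstar P q lam0 f0 f f₁
      ≤ Real.exp M₁ * Real.exp M₂ * Lam * ∫ x, (f₁ x) ^ 2 ∂P := by
  classical
  obtain ⟨hfm, Mf, hMf⟩ := hf
  obtain ⟨hf0m, Mf0, hMf0⟩ := hf0
  obtain ⟨hf1m, K, hK⟩ := hf₁
  have hM₁' : ∀ x, |f x - f0 x| ≤ M₁ := fun x => hM₁.1 ⟨x, rfl⟩
  have hM₂' : ∀ x, |f x| ≤ M₂ := fun x => hM₂.1 ⟨x, rfl⟩
  have hq0 : ∀ x t, 0 ≤ q x t := fun x t => (hq01 x t).1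
  have hqle1 : ∀ x t, q x t ≤ 1 := fun x t => (hq01 x t).2
  have hexpf : ∀ x, Real.exp (f x) ≤ Real.exp Mf :=
    fun x => Real.exp_le_exp.mpr (le_trans (le_abs_self _) (hMf x))
  have hexpf0 : ∀ x, Real.exp (f0 x) ≤ Real.exp Mf0 :=
    fun x => Real.exp_le_exp.mpr (le_trans (le_abs_self _) (hMf0 x))
  have hf1sq : ∀ x, f₁ x ^ 2 ≤ K ^ 2 := fun x =>
    sq_le_sq' (by linarith [(abs_le.mp (hK x)).1]) (abs_le.mp (hK x)).2
  -- integrability helper for q-weighted integrals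
  have hint_q : ∀ (t : ℝ) (h : 𝒳 → ℝ), Measurable h → ∀ C : ℝ, (∀ x, |h x| ≤ C) →
      Integrable (fun x => q x t * h x) P := by
    intro t h hm C hC
    refine integrable_of_bdd_helper P ((hqmeas t).mul hm) (C := C) fun x => ?_
    rw [abs_mul]
    calc |q x t| * |h x| ≤ 1 * C := by
          refine mul_le_mul ?_ (hC x) (abs_nonneg _) zero_le_one
          rw [abs_of_nonneg (hq0 x t)]; exact hqle1 x t
      _ = C := one_mul C
  have hqint : ∀ t, Integrable (fun x => q x t) P := by
    intro t
    have := hint_q t (fun _ => 1) measurable_const 1 (fun x => by norm_num)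
    simpa using this
  -- a.e. antitonicity of q in t
  have hmono : ∀ s t : ℝ, s ≤ t → ∀ᵐ x ∂P, q x t ≤ q x s := by
    intro s t hst
    have key : ∀ B : Set 𝒳, MeasurableSet B → P B < ⊤ →
        0 ≤ ∫ x in B, (q x s - q x t) ∂P := by
      intro B hB _
      rw [integral_sub (hqint s).integrableOn (hqint t).integrableOn,
        ← hq B hB s, ← hq B hB t]
      refine sub_nonneg.mpr (ENNReal.toReal_mono (measure_ne_top μ _) (measure_mono ?_))
      rintro ω ⟨h1, h2⟩
      exact ⟨h1, le_trans hst h2⟩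
    have h := ae_nonneg_of_forall_setIntegral_nonneg ((hqint s).sub (hqint t)) key
    filter_upwards [h] with x hx
    simpa [sub_nonneg] using hx
  -- antitone integrals in t
  have hGanti : ∀ (h : 𝒳 → ℝ) (C : ℝ), Measurable h → (∀ x, 0 ≤ h x) → (∀ x, |h x| ≤ C) →
      Antitone (fun t => ∫ x, q x t * h x ∂P) := by
    intro h C hm h0 hC s t hst
    refine integral_mono_ae (hint_q t h hm C hC) (hint_q s h hm C hC) ?_
    filter_upwards [hmono s t hst] with x hx
    exact mul_le_mul_of_nonneg_right hx (h0 x)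
  have habs_exp : ∀ (g : 𝒳 → ℝ) (Mg : ℝ), (∀ x, Real.exp (g x) ≤ Real.exp Mg) →
      ∀ x, |Real.exp (g x)| ≤ Real.exp Mg := fun g Mg hMg x => by
    rw [abs_of_pos (Real.exp_pos _)]; exact hMg x
  -- measurability in t of the survival integrals
  have hSmeas : Measurable (fun t => survS P q f t) :=
    (hGanti (fun x => Real.exp (f x)) (Real.exp Mf) hfm.exp
      (fun x => (Real.exp_pos _).le) (habs_exp f Mf hexpf)).measurable
  have hS0meas : Measurable (fun t => survS P q f0 t) :=
    (hGanti (fun x => Real.exp (f0 x)) (Real.exp Mf0) hf0m.exp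
      (fun x => (Real.exp_pos _).le) (habs_exp f0 Mf0 hexpf0)).measurable
  have hD2eqfun : (fun t => survD2S P q f f₁ t)
      = fun t => ∫ x, q x t * (Real.exp (f x) * f₁ x ^ 2) ∂P := by
    funext t
    unfold survD2S
    congr 1
    funext x
    ring
  have hD2Smeas : Measurable (fun t => survD2S P q f f₁ t) := by
    rw [hD2eqfun]
    refine (hGanti (fun x => Real.exp (f x) * f₁ x ^ 2) (Real.exp Mf * K ^ 2)
      (hfm.exp.mul (hf1m.pow_const 2))
      (fun x => mul_nonneg (Real.exp_pos _).le (sq_nonneg _)) (fun x => ?_)).measurable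
    rw [abs_mul, abs_of_pos (Real.exp_pos _), abs_of_nonneg (sq_nonneg _)]
    exact mul_le_mul (hexpf x) (hf1sq x) (sq_nonneg _) (Real.exp_pos _).le
  -- per-t integrability (in x)
  have hSfint : ∀ t, Integrable (fun x => q x t * Real.exp (f x)) P := fun t =>
    hint_q t _ hfm.exp (Real.exp Mf) (habs_exp f Mf hexpf)
  have hS0int : ∀ t, Integrable (fun x => q x t * Real.exp (f0 x)) P := fun t =>
    hint_q t _ hf0m.exp (Real.exp Mf0) (habs_exp f0 Mf0 hexpf0)
  have hDSint : ∀ t, Integrable (fun x => q x t * Real.exp (f x) * f₁ x) P := by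
    intro t
    have h := hint_q t (fun x => Real.exp (f x) * f₁ x) (hfm.exp.mul hf1m)
      (Real.exp Mf * K) (fun x => by
        rw [abs_mul, abs_of_pos (Real.exp_pos _)]
        exact mul_le_mul (hexpf x) (hK x) (abs_nonneg _) (Real.exp_pos _).le)
    simpa [mul_assoc] using h
  have hD2int : ∀ t, Integrable (fun x => q x t * Real.exp (f x) * f₁ x ^ 2) P := by
    intro t
    have h := hint_q t (fun x => Real.exp (f x) * f₁ x ^ 2) (hfm.exp.mul (hf1m.pow_const 2))
      (Real.exp Mf * K ^ 2) (fun x => by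
        rw [abs_mul, abs_of_pos (Real.exp_pos _), abs_of_nonneg (sq_nonneg _)]
        exact mul_le_mul (hexpf x) (hf1sq x) (sq_nonneg _) (Real.exp_pos _).le)
    simpa [mul_assoc] using h
  have hDSfun : (fun t => survDS P q f f₁ t)
      = fun t => (∫ x, q x t * (Real.exp (f x) * (f₁ x + K)) ∂P)
          - K * ∫ x, q x t * Real.exp (f x) ∂P := by
    funext t
    have h1 : ∫ x, q x t * (Real.exp (f x) * (f₁ x + K)) ∂P
        = (∫ x, q x t * Real.exp (f x) * f₁ x ∂P)
          + ∫ x, K * (q x t * Real.exp (f x)) ∂P := by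
      rw [← integral_add (hDSint t) ((hSfint t).const_mul K)]
      congr 1
      funext x
      ring
    unfold survDS
    rw [h1, integral_const_mul]
    ring
  have hDSmeas : Measurable (fun t => survDS P q f f₁ t) := by
    rw [hDSfun]
    have ha : Antitone (fun t => ∫ x, q x t * (Real.exp (f x) * (f₁ x + K)) ∂P) := by
      refine hGanti _ (Real.exp Mf * (K + K)) (hfm.exp.mul (hf1m.add_const K))
        (fun x => mul_nonneg (Real.exp_pos _).le
          (by linarith [(abs_le.mp (hK x)).1])) (fun x => ?_)
      rw [abs_mul, abs_of_pos (Real.exp_pos _)]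
      refine mul_le_mul (hexpf x) ?_ (abs_nonneg _) (Real.exp_pos _).le
      have h1 := abs_le.mp (hK x)
      rw [abs_of_nonneg (by linarith : (0:ℝ) ≤ f₁ x + K)]
      linarith
    exact ha.measurable.sub ((hGanti _ (Real.exp Mf) hfm.exp (fun x => (Real.exp_pos _).le)
      (habs_exp f Mf hexpf)).measurable.const_mul K)
  have hf1int : Integrable f₁ P := integrable_of_bdd_helper P hf1m hK
  have hf1sqint : Integrable (fun x => f₁ x ^ 2) P :=
    integrable_of_bdd_helper P (hf1m.pow_const 2)
      (fun x => by rw [abs_of_nonneg (sq_nonneg _)]; exact hf1sq x)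
  set m := ∫ y, f₁ y ∂P with hm
  set V := ∫ x, (f₁ x - m) ^ 2 ∂P with hVdef
  set I2 := ∫ x, f₁ x ^ 2 ∂P with hI2def
  have hVnonneg : 0 ≤ V := integral_nonneg fun x => sq_nonneg _
  set cL := Real.exp (-M₁) * Real.exp (-M₂) * q1 * V with hcLdef
  set cU := Real.exp M₁ * Real.exp M₂ * I2 with hcUdef
  have hsqbdd : ∀ d : ℝ, ∀ x, |(f₁ x - d) ^ 2| ≤ (K + |d|) ^ 2 := by
    intro d x
    rw [abs_of_nonneg (sq_nonneg _)]
    have h1 : |f₁ x - d| ≤ K + |d| := by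
      calc |f₁ x - d| ≤ |f₁ x| + |d| := abs_sub _ _
        _ ≤ K + |d| := by linarith [hK x]
    calc (f₁ x - d) ^ 2 = |f₁ x - d| ^ 2 := (sq_abs _).symm
      _ ≤ (K + |d|) ^ 2 := pow_le_pow_left₀ (abs_nonneg _) h1 2
  have hsqint : ∀ d : ℝ, Integrable (fun x => (f₁ x - d) ^ 2) P := fun d =>
    integrable_of_bdd_helper P ((hf1m.sub measurable_const).pow_const 2) (hsqbdd d)
  have hquad : ∀ d : ℝ, ∫ x, (f₁ x - d) ^ 2 ∂P = V + (m - d) ^ 2 := by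
    intro d
    have hfe : (fun x => (f₁ x - d) ^ 2)
        = fun x => ((f₁ x - m) ^ 2 + (2 * (m - d)) * f₁ x)
            + ((m - d) ^ 2 - 2 * (m - d) * m) :=
      funext fun x => by ring
    have hIa : Integrable (fun x => (f₁ x - m) ^ 2 + (2 * (m - d)) * f₁ x) P :=
      (hsqint m).add (hf1int.const_mul _)
    rw [hfe, integral_add hIa (integrable_const _),
      integral_add (hsqint m) (hf1int.const_mul _), integral_const_mul, integral_const]
    simp only [measure_univ, probReal_univ, ENNReal.toReal_one, smul_eq_mul, one_mul]
    rw [← hm, ← hVdef]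
    ring
  -- main pointwise-in-t bounds
  have hkey : ∀ t ∈ Set.Icc (0:ℝ) 1,
      cL ≤ (survD2S P q f f₁ t / survS P q f t
          - (survDS P q f f₁ t / survS P q f t) ^ 2) * survS P q f0 t ∧
      (survD2S P q f f₁ t / survS P q f t
          - (survDS P q f f₁ t / survS P q f t) ^ 2) * survS P q f0 t ≤ cU := by
    intro t ht
    have hq1t : ∀ᵐ x ∂P, q1 ≤ q x t := by
      filter_upwards [hmono t 1 ht.2] with x hx
      exact le_trans (hq1 x) hx
    set S := survS P q f t with hSdef
    set S0 := survS P q f0 t with hS0def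
    set D := survDS P q f f₁ t with hDdef
    set D2 := survD2S P q f f₁ t with hD2def
    have hS_lb : q1 * Real.exp (-M₂) ≤ S := by
      have h0 : (q1 * Real.exp (-M₂)) = ∫ _ : 𝒳, q1 * Real.exp (-M₂) ∂P := by
        simp [measure_univ]
      rw [hSdef]
      unfold survS
      rw [h0]
      refine integral_mono_ae (integrable_const _) (hSfint t) ?_
      filter_upwards [hq1t] with x hx
      have hex : Real.exp (-M₂) ≤ Real.exp (f x) :=
        Real.exp_le_exp.mpr (by linarith [(abs_le.mp (hM₂' x)).1])
      exact mul_le_mul hx hex (Real.exp_pos _).le (le_trans hq1pos.le hx)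
    have hSpos : 0 < S := lt_of_lt_of_le (by positivity) hS_lb
    have hS0_nonneg : 0 ≤ S0 :=
      integral_nonneg fun x => mul_nonneg (hq0 x t) (Real.exp_pos _).le
    have hS0_ub : S0 ≤ Real.exp M₁ * S := by
      rw [hSdef, hS0def]
      unfold survS
      rw [← integral_const_mul]
      refine integral_mono (hS0int t) ((hSfint t).const_mul _) fun x => ?_
      have h1 : Real.exp (f0 x) ≤ Real.exp M₁ * Real.exp (f x) := by
        rw [← Real.exp_add]
        exact Real.exp_le_exp.mpr (by linarith [(abs_le.mp (hM₁' x)).1])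
      calc q x t * Real.exp (f0 x) ≤ q x t * (Real.exp M₁ * Real.exp (f x)) :=
            mul_le_mul_of_nonneg_left h1 (hq0 x t)
        _ = Real.exp M₁ * (q x t * Real.exp (f x)) := by ring
    have hS0_lb : Real.exp (-M₁) * S ≤ S0 := by
      rw [hSdef, hS0def]
      unfold survS
      rw [← integral_const_mul]
      refine integral_mono ((hSfint t).const_mul _) (hS0int t) fun x => ?_
      have h1 : Real.exp (-M₁) * Real.exp (f x) ≤ Real.exp (f0 x) := by
        rw [← Real.exp_add]
        exact Real.exp_le_exp.mpr (by linarith [(abs_le.mp (hM₁' x)).2])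
      calc Real.exp (-M₁) * (q x t * Real.exp (f x))
          = q x t * (Real.exp (-M₁) * Real.exp (f x)) := by ring
        _ ≤ q x t * Real.exp (f0 x) := mul_le_mul_of_nonneg_left h1 (hq0 x t)
    have hD2_nonneg : 0 ≤ D2 := integral_nonneg fun x =>
      mul_nonneg (mul_nonneg (hq0 x t) (Real.exp_pos _).le) (sq_nonneg _)
    have hD2_ub : D2 ≤ Real.exp M₂ * I2 := by
      rw [hD2def, hI2def]
      unfold survD2S
      rw [← integral_const_mul]
      refine integral_mono (hD2int t) (hf1sqint.const_mul _) fun x => ?_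
      have hex : Real.exp (f x) ≤ Real.exp M₂ :=
        Real.exp_le_exp.mpr (le_trans (le_abs_self _) (hM₂' x))
      have h1 : q x t * Real.exp (f x) ≤ 1 * Real.exp M₂ :=
        mul_le_mul (hqle1 x t) hex (Real.exp_pos _).le zero_le_one
      calc q x t * Real.exp (f x) * f₁ x ^ 2 ≤ 1 * Real.exp M₂ * f₁ x ^ 2 :=
            mul_le_mul_of_nonneg_right h1 (sq_nonneg _)
        _ = Real.exp M₂ * f₁ x ^ 2 := by ring
    -- variance identity
    set c := D / S with hcdef
    have hWint : Integrable (fun x => q x t * Real.exp (f x) * (f₁ x - c) ^ 2) P := by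
      have h := hint_q t (fun x => Real.exp (f x) * (f₁ x - c) ^ 2)
        (hfm.exp.mul ((hf1m.sub measurable_const).pow_const 2))
        (Real.exp Mf * (K + |c|) ^ 2) (fun x => by
          rw [abs_mul, abs_of_pos (Real.exp_pos _)]
          exact mul_le_mul (hexpf x) (hsqbdd c x)
            (abs_nonneg _) (Real.exp_pos _).le)
      simpa [mul_assoc] using h
    set W := ∫ x, q x t * Real.exp (f x) * (f₁ x - c) ^ 2 ∂P with hWdef
    have hW_nonneg : 0 ≤ W := integral_nonneg fun x =>
      mul_nonneg (mul_nonneg (hq0 x t) (Real.exp_pos _).le) (sq_nonneg _)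
    have hWeq : W = D2 - 2 * c * D + c ^ 2 * S := by
      rw [hWdef, hD2def, hDdef, hSdef]
      unfold survD2S survDS survS
      have hfe : (fun x => q x t * Real.exp (f x) * (f₁ x - c) ^ 2)
          = fun x => (q x t * Real.exp (f x) * f₁ x ^ 2
              - (2 * c) * (q x t * Real.exp (f x) * f₁ x))
            + c ^ 2 * (q x t * Real.exp (f x)) := funext fun x => by ring
      have hIa : Integrable (fun x => q x t * Real.exp (f x) * f₁ x ^ 2
          - (2 * c) * (q x t * Real.exp (f x) * f₁ x)) P :=
        (hD2int t).sub ((hDSint t).const_mul _)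
      have hIb : Integrable (fun x => (2 * c) * (q x t * Real.exp (f x) * f₁ x)) P :=
        (hDSint t).const_mul _
      have hIc : Integrable (fun x => c ^ 2 * (q x t * Real.exp (f x))) P :=
        (hSfint t).const_mul _
      rw [hfe, integral_add hIa hIc, integral_sub (hD2int t) hIb,
        integral_const_mul, integral_const_mul]
    have hA : D2 / S - c ^ 2 = W / S := by
      rw [hWeq, hcdef]
      field_simp
      ring
    -- lower bound on the variance term
    have hW_lb : q1 * Real.exp (-M₂) * V ≤ W := by
      have h2 : V ≤ ∫ x, (f₁ x - c) ^ 2 ∂P := by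
        rw [hquad c]
        nlinarith [sq_nonneg (m - c)]
      have h1 : q1 * Real.exp (-M₂) * ∫ x, (f₁ x - c) ^ 2 ∂P ≤ W := by
        rw [hWdef, ← integral_const_mul]
        refine integral_mono_ae ((hsqint c).const_mul _) hWint ?_
        filter_upwards [hq1t] with x hx
        have hex : Real.exp (-M₂) ≤ Real.exp (f x) :=
          Real.exp_le_exp.mpr (by linarith [(abs_le.mp (hM₂' x)).1])
        have hqe : q1 * Real.exp (-M₂) ≤ q x t * Real.exp (f x) :=
          mul_le_mul hx hex (Real.exp_pos _).le (le_trans hq1pos.le hx)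
        exact mul_le_mul_of_nonneg_right hqe (sq_nonneg _)
      have h3 : q1 * Real.exp (-M₂) * V ≤ q1 * Real.exp (-M₂) * ∫ x, (f₁ x - c) ^ 2 ∂P :=
        mul_le_mul_of_nonneg_left h2 (by positivity)
      linarith
    constructor
    · -- lower bound
      rw [hA]
      have step1 : Real.exp (-M₁) * W ≤ W / S * S0 := by
        have h1 : W / S * (Real.exp (-M₁) * S) ≤ W / S * S0 :=
          mul_le_mul_of_nonneg_left hS0_lb (div_nonneg hW_nonneg hSpos.le)
        have h2 : W / S * (Real.exp (-M₁) * S) = Real.exp (-M₁) * W := by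
          field_simp
        linarith
      have step2 : cL ≤ Real.exp (-M₁) * W := by
        rw [hcLdef]
        have h3 := mul_le_mul_of_nonneg_left hW_lb (Real.exp_pos (-M₁)).le
        have h4 : Real.exp (-M₁) * Real.exp (-M₂) * q1 * V
            = Real.exp (-M₁) * (q1 * Real.exp (-M₂) * V) := by ring
        linarith
      linarith
    · -- upper bound
      have hstep0 : (D2 / S - c ^ 2) * S0 ≤ D2 / S * S0 :=
        mul_le_mul_of_nonneg_right (sub_le_self _ (sq_nonneg _)) hS0_nonneg
      have hstep1 : D2 / S * S0 ≤ D2 / S * (Real.exp M₁ * S) :=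
        mul_le_mul_of_nonneg_left hS0_ub (div_nonneg hD2_nonneg hSpos.le)
      have hstep2 : D2 / S * (Real.exp M₁ * S) = Real.exp M₁ * D2 := by
        field_simp
      have hstep3 : Real.exp M₁ * D2 ≤ Real.exp M₁ * (Real.exp M₂ * I2) :=
        mul_le_mul_of_nonneg_left hD2_ub (Real.exp_pos _).le
      have hcUeq : Real.exp M₁ * (Real.exp M₂ * I2) = cU := by
        rw [hcUdef]; ring
      linarith
  -- assemble the integral bounds
  have hexprmeas : Measurable (fun t =>
      (survD2S P q f f₁ t / survS P q f t - (survDS P q f f₁ t / survS P q f t) ^ 2)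
        * survS P q f0 t) :=
    ((hD2Smeas.div hSmeas).sub ((hDSmeas.div hSmeas).pow_const 2)).mul hS0meas
  have habs_expr : ∀ t ∈ Set.Icc (0:ℝ) 1,
      |(survD2S P q f f₁ t / survS P q f t - (survDS P q f f₁ t / survS P q f t) ^ 2)
        * survS P q f0 t| ≤ |cL| + |cU| := by
    intro t ht
    obtain ⟨h1, h2⟩ := hkey t ht
    rw [abs_le]
    constructor
    · have := neg_abs_le cL
      have := abs_nonneg cU
      linarith
    · have := le_abs_self cU
      have := abs_nonneg cL
      linarith
  have hφint : IntegrableOn (fun t =>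
      (survD2S P q f f₁ t / survS P q f t - (survDS P q f f₁ t / survS P q f t) ^ 2)
        * survS P q f0 t * lam0 t) (Set.Icc (0:ℝ) 1) := by
    refine Integrable.mono' ((hlam0int.norm).const_mul (|cL| + |cU|))
      ((hexprmeas.mul hlam0meas).aestronglyMeasurable.restrict) ?_
    filter_upwards [ae_restrict_mem measurableSet_Icc] with t ht
    rw [Real.norm_eq_abs, Real.norm_eq_abs, abs_mul]
    exact mul_le_mul_of_nonneg_right (habs_expr t ht) (abs_nonneg _)
  have hlow : cL * Lam ≤ D2lstar P q lam0 f0 f f₁ := by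
    have h1 : ∫ t in Set.Icc (0:ℝ) 1, cL * lam0 t
        ≤ ∫ t in Set.Icc (0:ℝ) 1,
          (survD2S P q f f₁ t / survS P q f t - (survDS P q f f₁ t / survS P q f t) ^ 2)
            * survS P q f0 t * lam0 t :=
      setIntegral_mono_on (hlam0int.const_mul cL) hφint measurableSet_Icc
        (fun t ht => mul_le_mul_of_nonneg_right (hkey t ht).1 (hlam0nonneg t ht))
    have h2 : ∫ t in Set.Icc (0:ℝ) 1, cL * lam0 t = cL * Lam := by
      rw [integral_const_mul, hLam]
    unfold D2lstar
    linarith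
  have hhigh : D2lstar P q lam0 f0 f f₁ ≤ cU * Lam := by
    have h1 : ∫ t in Set.Icc (0:ℝ) 1,
          (survD2S P q f f₁ t / survS P q f t - (survDS P q f f₁ t / survS P q f t) ^ 2)
            * survS P q f0 t * lam0 t
        ≤ ∫ t in Set.Icc (0:ℝ) 1, cU * lam0 t :=
      setIntegral_mono_on hφint (hlam0int.const_mul cU) measurableSet_Icc
        (fun t ht => mul_le_mul_of_nonneg_right (hkey t ht).2 (hlam0nonneg t ht))
    have h2 : ∫ t in Set.Icc (0:ℝ) 1, cU * lam0 t = cU * Lam := by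
      rw [integral_const_mul, hLam]
    unfold D2lstar
    linarith
  constructor
  · calc Real.exp (-M₁) * Real.exp (-M₂) * Lam * q1 * V = cL * Lam := by
          rw [hcLdef]; ring
      _ ≤ _ := hlow
  · calc D2lstar P q lam0 f0 f f₁ ≤ cU * Lam := hhigh
      _ = Real.exp M₁ * Real.exp M₂ * Lam * I2 := by rw [hcUdef]; ring
end

section
/- Lipschitz dependence of the kernel estimator on the regularisation parameter: for all γ' ≥ γ > 0, ‖f̂_{n,γ'} − f̂_{n,γ}‖_∞ ≤ 2√K (γ' − γ)√(log n) / γ^{3/2}. -/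
open MeasureTheory

/-- A kernel on `X`: a symmetric function that is positive semi-definite on finite point sets. -/
def IsKernel {X : Type*} (k : X → X → ℝ) : Prop :=
  (∀ x y, k x y = k y x) ∧
  ∀ (n : ℕ) (x : Fin n → X) (c : Fin n → ℝ),
    0 ≤ ∑ i : Fin n, ∑ j : Fin n, c i * c j * k (x i) (x j)

/-- An abstract axiomatisation of the (unique) reproducing kernel Hilbert space of a
kernel `k`: a complete inner-product space of real-valued functions on `X` containing the
kernel sections and satisfying the reproducing property. -/
structure AbstractRKHS (X : Type*) (k : X → X → ℝ) where
  carrier : Set (X → ℝ)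
  inn : (X → ℝ) → (X → ℝ) → ℝ
  zero_mem : (fun _ => (0 : ℝ)) ∈ carrier
  add_mem : ∀ f ∈ carrier, ∀ g ∈ carrier, (fun x => f x + g x) ∈ carrier
  smul_mem : ∀ (c : ℝ), ∀ f ∈ carrier, (fun x => c * f x) ∈ carrier
  inn_symm : ∀ f g, inn f g = inn g f
  inn_add_left : ∀ f g h, inn (fun x => f x + g x) h = inn f h + inn g h
  inn_smul_left : ∀ (c : ℝ) (f g), inn (fun x => c * f x) g = c * inn f g
  inn_nonneg : ∀ f ∈ carrier, 0 ≤ inn f f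
  inn_definite : ∀ f ∈ carrier, inn f f = 0 → f = fun _ => 0
  kernel_mem : ∀ x, (fun y => k y x) ∈ carrier
  reproducing : ∀ f ∈ carrier, ∀ x, inn f (fun y => k y x) = f x
  complete : ∀ f : ℕ → X → ℝ, (∀ m, f m ∈ carrier) →
    (∀ ε : ℝ, 0 < ε → ∃ N : ℕ, ∀ m ≥ N, ∀ l ≥ N,
      inn (fun x => f m x - f l x) (fun x => f m x - f l x) < ε) →
    ∃ g ∈ carrier, ∀ ε : ℝ, 0 < ε → ∃ N : ℕ, ∀ m ≥ N,
      inn (fun x => f m x - g x) (fun x => f m x - g x) < ε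

/-- `S_n(f,t) = n^{-1} Σ_i R_i(t) e^{f(X_i)}` with `R_i(t) = 1{T_i ≥ t}`. -/
noncomputable def empSn {𝒳 : Type*} (n : ℕ) (X : Fin n → 𝒳) (T : Fin n → ℝ)
    (f : 𝒳 → ℝ) (t : ℝ) : ℝ :=
  (1 / (n : ℝ)) * ∑ i : Fin n, (if t ≤ T i then (1 : ℝ) else 0) * Real.exp (f (X i))

/-- The empirical negative log-partial likelihood
`ℓ_n(f) = n^{-1} Σ_i N_i(1) (log S_n(f,T_i) − f(X_i))`, `N_i(1) = 1{T_i ≤ 1, I_i = 0}`. -/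
noncomputable def empLn {𝒳 : Type*} (n : ℕ) (X : Fin n → 𝒳) (T : Fin n → ℝ)
    (I : Fin n → Bool) (f : 𝒳 → ℝ) : ℝ :=
  (1 / (n : ℝ)) * ∑ i : Fin n,
    (if T i ≤ 1 ∧ I i = false then (1 : ℝ) else 0) *
      (Real.log (empSn n X T f (T i)) - f (X i))

/-- `P_n(f) = n^{-1} Σ_i f(X_i)`. -/
noncomputable def empPn {𝒳 : Type*} (n : ℕ) (X : Fin n → 𝒳) (f : 𝒳 → ℝ) : ℝ :=
  (1 / (n : ℝ)) * ∑ i : Fin n, f (X i)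

/-- The penalised negative log-partial likelihood
`ℓ_{n,γ}(f) = ℓ_n(f) + γ‖f − P_n(f)1_𝒳‖²_𝓗 + γ P_n(f)²`. -/
noncomputable def empLnGamma {𝒳 : Type*} {k : 𝒳 → 𝒳 → ℝ} (H : AbstractRKHS 𝒳 k)
    (n : ℕ) (X : Fin n → 𝒳) (T : Fin n → ℝ) (I : Fin n → Bool)
    (γ : ℝ) (f : 𝒳 → ℝ) : ℝ :=
  empLn n X T I f +
    γ * H.inn (fun x => f x - empPn n X f) (fun x => f x - empPn n X f) +
    γ * (empPn n X f) ^ 2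

section Aux

variable {𝒳 : Type*} {k : 𝒳 → 𝒳 → ℝ}

/-- Transport of membership along pointwise equality. -/
lemma mem_congr' {S : Set (𝒳 → ℝ)} {f g : 𝒳 → ℝ} (h : ∀ x, f x = g x) (hf : f ∈ S) :
    g ∈ S := (funext h : f = g) ▸ hf

/-- Hölder inequality for finite sums. -/
lemma sum_rpow_holder {ι : Type*} (s : Finset ι) (a b : ι → ℝ) {t : ℝ}
    (ht0 : 0 ≤ t) (ht1 : t ≤ 1)
    (ha : ∀ i ∈ s, 0 ≤ a i) (hb : ∀ i ∈ s, 0 ≤ b i)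
    (hA : 0 < ∑ i ∈ s, a i) (hB : 0 < ∑ i ∈ s, b i) :
    ∑ i ∈ s, a i ^ (1 - t) * b i ^ t
      ≤ (∑ i ∈ s, a i) ^ (1 - t) * (∑ i ∈ s, b i) ^ t := by
  set A := ∑ i ∈ s, a i with hAdef
  set B := ∑ i ∈ s, b i with hBdef
  have hC : (0:ℝ) ≤ A ^ (1 - t) * B ^ t := by positivity
  have key : ∀ i ∈ s, a i ^ (1 - t) * b i ^ t
      ≤ A ^ (1 - t) * B ^ t * ((1 - t) * (a i / A) + t * (b i / B)) := by
    intro i hi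
    have ha' := ha i hi
    have hb' := hb i hi
    have hA1 : A ^ (1 - t) ≠ 0 := (Real.rpow_pos_of_pos hA _).ne'
    have hB1 : B ^ t ≠ 0 := (Real.rpow_pos_of_pos hB _).ne'
    have h1 : A ^ (1 - t) * B ^ t * ((a i / A) ^ (1 - t) * (b i / B) ^ t)
        = a i ^ (1 - t) * b i ^ t := by
      rw [Real.div_rpow ha' hA.le, Real.div_rpow hb' hB.le]
      field_simp
    rw [← h1]
    exact mul_le_mul_of_nonneg_left
      (Real.geom_mean_le_arith_mean2_weighted (by linarith) ht0 (by positivity)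
        (by positivity) (by ring)) hC
  calc ∑ i ∈ s, a i ^ (1 - t) * b i ^ t
      ≤ ∑ i ∈ s, A ^ (1 - t) * B ^ t * ((1 - t) * (a i / A) + t * (b i / B)) :=
        Finset.sum_le_sum key
    _ = A ^ (1 - t) * B ^ t * ((1 - t) * (A / A) + t * (B / B)) := by
        rw [← Finset.mul_sum]
        congr 1
        rw [Finset.sum_add_distrib, ← Finset.mul_sum, ← Finset.mul_sum,
          ← Finset.sum_div, ← Finset.sum_div]
    _ = A ^ (1 - t) * B ^ t := by
        rw [div_self hA.ne', div_self hB.ne']; ring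

variable {n : ℕ} {X : Fin n → 𝒳} {T : Fin n → ℝ} {I : Fin n → Bool}

lemma empSn_pos (hn : 0 < n) (f : 𝒳 → ℝ) (i : Fin n) :
    0 < empSn n X T f (T i) := by
  unfold empSn
  have hn' : (0:ℝ) < 1 / n := by positivity
  refine mul_pos hn' (Finset.sum_pos' (fun j _ => ?_) ⟨i, Finset.mem_univ i, ?_⟩)
  · exact mul_nonneg (by split <;> norm_num) (Real.exp_pos _).le
  · rw [if_pos (le_refl (T i)), one_mul]; exact Real.exp_pos _

lemma empSn_combo (hn : 0 < n) (f g : 𝒳 → ℝ) {t : ℝ} (ht0 : 0 ≤ t) (ht1 : t ≤ 1)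
    (i : Fin n) :
    empSn n X T (fun x => (1 - t) * f x + t * g x) (T i)
      ≤ empSn n X T f (T i) ^ (1 - t) * empSn n X T g (T i) ^ t := by
  set a : Fin n → ℝ := fun j =>
    (1 / (n:ℝ)) * ((if T i ≤ T j then (1:ℝ) else 0) * Real.exp (f (X j))) with hadef
  set b : Fin n → ℝ := fun j =>
    (1 / (n:ℝ)) * ((if T i ≤ T j then (1:ℝ) else 0) * Real.exp (g (X j))) with hbdef
  have ha : ∀ j ∈ Finset.univ, 0 ≤ a j := by
    intro j _; rw [hadef]
    exact mul_nonneg (by positivity) (mul_nonneg (by split <;> norm_num) (Real.exp_pos _).le)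
  have hb : ∀ j ∈ Finset.univ, 0 ≤ b j := by
    intro j _; rw [hbdef]
    exact mul_nonneg (by positivity) (mul_nonneg (by split <;> norm_num) (Real.exp_pos _).le)
  have hsa : empSn n X T f (T i) = ∑ j : Fin n, a j := by
    unfold empSn; rw [Finset.mul_sum]
  have hsb : empSn n X T g (T i) = ∑ j : Fin n, b j := by
    unfold empSn; rw [Finset.mul_sum]
  have hA : 0 < ∑ j : Fin n, a j := hsa ▸ empSn_pos hn f i
  have hB : 0 < ∑ j : Fin n, b j := hsb ▸ empSn_pos hn g i
  have hterm : ∀ j : Fin n,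
      (1 / (n:ℝ)) * ((if T i ≤ T j then (1:ℝ) else 0) *
        Real.exp ((1 - t) * f (X j) + t * g (X j))) = a j ^ (1 - t) * b j ^ t := by
    intro j
    set c : ℝ := (1 / (n:ℝ)) * (if T i ≤ T j then (1:ℝ) else 0) with hcdef
    have hc : 0 ≤ c := by rw [hcdef]; positivity
    have haj : a j = c * Real.exp (f (X j)) := by rw [hadef, hcdef]; ring
    have hbj : b j = c * Real.exp (g (X j)) := by rw [hbdef, hcdef]; ring
    rw [haj, hbj, Real.mul_rpow hc (Real.exp_pos _).le,
      Real.mul_rpow hc (Real.exp_pos _).le, ← Real.exp_mul, ← Real.exp_mul]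
    have hcc : c ^ (1 - t) * c ^ t = c := by
      rw [← Real.rpow_add' hc (by norm_num)]
      norm_num
    calc (1 / (n:ℝ)) * ((if T i ≤ T j then (1:ℝ) else 0) *
          Real.exp ((1 - t) * f (X j) + t * g (X j)))
        = (c ^ (1 - t) * c ^ t) * Real.exp (f (X j) * (1 - t) + g (X j) * t) := by
          rw [hcc, hcdef]; ring_nf
      _ = c ^ (1 - t) * Real.exp (f (X j) * (1 - t)) *
            (c ^ t * Real.exp (g (X j) * t)) := by
          rw [Real.exp_add]; ring
  calc empSn n X T (fun x => (1 - t) * f x + t * g x) (T i)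
      = ∑ j : Fin n, a j ^ (1 - t) * b j ^ t := by
        unfold empSn; rw [Finset.mul_sum]
        exact Finset.sum_congr rfl fun j _ => hterm j
    _ ≤ (∑ j : Fin n, a j) ^ (1 - t) * (∑ j : Fin n, b j) ^ t :=
        sum_rpow_holder _ a b ht0 ht1 ha hb hA hB
    _ = empSn n X T f (T i) ^ (1 - t) * empSn n X T g (T i) ^ t := by
        rw [hsa, hsb]

lemma log_empSn_convex (hn : 0 < n) (f g : 𝒳 → ℝ) {t : ℝ} (ht0 : 0 ≤ t) (ht1 : t ≤ 1)
    (i : Fin n) :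
    Real.log (empSn n X T (fun x => (1 - t) * f x + t * g x) (T i))
      ≤ (1 - t) * Real.log (empSn n X T f (T i))
        + t * Real.log (empSn n X T g (T i)) := by
  have h1 := empSn_combo (X := X) (T := T) hn f g ht0 ht1 i
  have hf := empSn_pos (X := X) (T := T) hn f i
  have hg := empSn_pos (X := X) (T := T) hn g i
  have hc := empSn_pos (X := X) (T := T) hn (fun x => (1 - t) * f x + t * g x) i
  calc Real.log (empSn n X T (fun x => (1 - t) * f x + t * g x) (T i))
      ≤ Real.log (empSn n X T f (T i) ^ (1 - t) * empSn n X T g (T i) ^ t) :=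
        Real.log_le_log hc h1
    _ = (1 - t) * Real.log (empSn n X T f (T i))
        + t * Real.log (empSn n X T g (T i)) := by
        rw [Real.log_mul (Real.rpow_pos_of_pos hf _).ne' (Real.rpow_pos_of_pos hg _).ne',
          Real.log_rpow hf, Real.log_rpow hg]

lemma empLn_convex (hn : 0 < n) (f g : 𝒳 → ℝ) {t : ℝ} (ht0 : 0 ≤ t) (ht1 : t ≤ 1) :
    empLn n X T I (fun x => (1 - t) * f x + t * g x)
      ≤ (1 - t) * empLn n X T I f + t * empLn n X T I g := by
  unfold empLn
  rw [show ∀ S1 S2 : ℝ, (1 - t) * (1 / (n:ℝ) * S1) + t * (1 / (n:ℝ) * S2)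
      = 1 / (n:ℝ) * ((1 - t) * S1 + t * S2) from fun S1 S2 => by ring]
  refine mul_le_mul_of_nonneg_left ?_ (by positivity)
  rw [Finset.mul_sum, Finset.mul_sum, ← Finset.sum_add_distrib]
  refine Finset.sum_le_sum fun i _ => ?_
  simp only []
  by_cases hd : T i ≤ 1 ∧ I i = false
  · rw [if_pos hd]
    simp only [one_mul]
    have hlog := log_empSn_convex (X := X) (T := T) hn f g ht0 ht1 i
    have : (1 - t) * (Real.log (empSn n X T f (T i)) - f (X i))
        + t * (Real.log (empSn n X T g (T i)) - g (X i))
        = ((1 - t) * Real.log (empSn n X T f (T i))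
            + t * Real.log (empSn n X T g (T i)))
          - ((1 - t) * f (X i) + t * g (X i)) := by ring
    rw [this]
    exact sub_le_sub_right hlog _
  · rw [if_neg hd]; simp

lemma empLn_add_const (hn : 0 < n) (f : 𝒳 → ℝ) (c : ℝ) :
    empLn n X T I (fun x => f x + c) = empLn n X T I f := by
  unfold empLn
  congr 1
  refine Finset.sum_congr rfl fun i _ => ?_
  by_cases hd : T i ≤ 1 ∧ I i = false
  · rw [if_pos hd]
    simp only [one_mul]
    have hS : empSn n X T (fun x => f x + c) (T i) = Real.exp c * empSn n X T f (T i) := by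
      unfold empSn
      rw [Finset.mul_sum, Finset.mul_sum, Finset.mul_sum]
      refine Finset.sum_congr rfl fun j _ => ?_
      rw [Real.exp_add]; ring
    rw [hS, Real.log_mul (Real.exp_ne_zero c) (empSn_pos hn f i).ne', Real.log_exp]
    ring
  · rw [if_neg hd]; simp

lemma empLn_zero_le (hn : 0 < n) :
    empLn n X T I (fun _ : 𝒳 => (0:ℝ)) ≤ 0 := by
  unfold empLn
  refine mul_nonpos_of_nonneg_of_nonpos (by positivity)
    (Finset.sum_nonpos fun i _ => ?_)
  by_cases hd : T i ≤ 1 ∧ I i = false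
  · rw [if_pos hd, one_mul]
    have hle : empSn n X T (fun _ : 𝒳 => (0:ℝ)) (T i) ≤ 1 := by
      unfold empSn
      have : ∑ j : Fin n, (if T i ≤ T j then (1:ℝ) else 0) * Real.exp 0 ≤ (n:ℝ) := by
        calc ∑ j : Fin n, (if T i ≤ T j then (1:ℝ) else 0) * Real.exp 0
            ≤ ∑ _j : Fin n, (1:ℝ) := by
              refine Finset.sum_le_sum fun j _ => ?_
              rw [Real.exp_zero, mul_one]
              split <;> norm_num
          _ = (n:ℝ) := by simp
      calc (1 / (n:ℝ)) * ∑ j : Fin n, (if T i ≤ T j then (1:ℝ) else 0) * Real.exp 0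
          ≤ (1 / (n:ℝ)) * (n:ℝ) := mul_le_mul_of_nonneg_left this (by positivity)
        _ = 1 := by field_simp
    have := Real.log_nonpos (empSn_pos (X := X) (T := T) hn (fun _ => (0:ℝ)) i).le hle
    simpa using this
  · rw [if_neg hd]; simp

lemma empLn_lower (hn : 0 < n) (f : 𝒳 → ℝ) :
    -Real.log n ≤ empLn n X T I f := by
  have hn1 : (1:ℝ) ≤ n := by exact_mod_cast hn
  have hlogn : 0 ≤ Real.log n := Real.log_nonneg hn1
  unfold empLn
  have hterm : ∀ i ∈ Finset.univ, -Real.log n ≤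
      (if T i ≤ 1 ∧ I i = false then (1:ℝ) else 0) *
        (Real.log (empSn n X T f (T i)) - f (X i)) := by
    intro i _
    by_cases hd : T i ≤ 1 ∧ I i = false
    · rw [if_pos hd, one_mul]
      have hsingle : (1 / (n:ℝ)) * Real.exp (f (X i)) ≤ empSn n X T f (T i) := by
        unfold empSn
        refine mul_le_mul_of_nonneg_left ?_ (by positivity)
        have := Finset.single_le_sum
          (f := fun j => (if T i ≤ T j then (1:ℝ) else 0) * Real.exp (f (X j)))
          (fun j _ => mul_nonneg (by split <;> norm_num) (Real.exp_pos _).le)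
          (Finset.mem_univ i)
        simpa using this
      have hlog : Real.log ((1 / (n:ℝ)) * Real.exp (f (X i)))
          ≤ Real.log (empSn n X T f (T i)) :=
        Real.log_le_log (by positivity) hsingle
      rw [one_div, Real.log_mul (inv_ne_zero (by exact_mod_cast hn.ne'))
        (Real.exp_ne_zero _), Real.log_inv, Real.log_exp] at hlog
      linarith
    · rw [if_neg hd, zero_mul]; linarith
  calc -Real.log n = (1 / (n:ℝ)) * ((n:ℝ) * (-Real.log n)) := by
        field_simp
    _ ≤ (1 / (n:ℝ)) * ∑ i : Fin n,
        (if T i ≤ 1 ∧ I i = false then (1:ℝ) else 0) *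
          (Real.log (empSn n X T f (T i)) - f (X i)) := by
        refine mul_le_mul_of_nonneg_left ?_ (by positivity)
        calc (n:ℝ) * (-Real.log n) = ∑ _i : Fin n, (-Real.log n) := by
              rw [Finset.sum_const, Finset.card_univ, Fintype.card_fin, nsmul_eq_mul]
          _ ≤ _ := Finset.sum_le_sum hterm

lemma empPn_comb (f g : 𝒳 → ℝ) (c : ℝ) :
    empPn n X (fun x => f x + c * g x) = empPn n X f + c * empPn n X g := by
  unfold empPn
  rw [Finset.sum_add_distrib, ← Finset.mul_sum]
  ring

lemma empPn_sub (f g : 𝒳 → ℝ) :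
    empPn n X (fun x => f x - g x) = empPn n X f - empPn n X g := by
  unfold empPn
  rw [Finset.sum_sub_distrib]
  ring

lemma empPn_sub_const (hn : 0 < n) (f : 𝒳 → ℝ) (c : ℝ) :
    empPn n X (fun x => f x - c) = empPn n X f - c := by
  unfold empPn
  rw [Finset.sum_sub_distrib, Finset.sum_const, Finset.card_univ, Fintype.card_fin,
    nsmul_eq_mul]
  have hn' : (n:ℝ) ≠ 0 := by exact_mod_cast hn.ne'
  field_simp

lemma empPn_zero : empPn n X (fun _ => (0:ℝ)) = 0 := by
  unfold empPn; simp

/- RKHS mini-API -/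

lemma inn_add_right (H : AbstractRKHS 𝒳 k) (f g h : 𝒳 → ℝ) :
    H.inn f (fun x => g x + h x) = H.inn f g + H.inn f h := by
  rw [H.inn_symm, H.inn_add_left, H.inn_symm g, H.inn_symm h]

lemma inn_smul_right (H : AbstractRKHS 𝒳 k) (c : ℝ) (f g : 𝒳 → ℝ) :
    H.inn f (fun x => c * g x) = c * H.inn f g := by
  rw [H.inn_symm, H.inn_smul_left, H.inn_symm]

lemma inn_zero_left (H : AbstractRKHS 𝒳 k) (g : 𝒳 → ℝ) :
    H.inn (fun _ => (0:ℝ)) g = 0 := by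
  have h0 : (fun _ : 𝒳 => (0:ℝ)) = (fun x => (0:ℝ) * g x) := by
    funext x; ring
  rw [h0, H.inn_smul_left, zero_mul]

lemma inn_expand (H : AbstractRKHS 𝒳 k) (f h : 𝒳 → ℝ) (t : ℝ) :
    H.inn (fun x => f x + t * h x) (fun x => f x + t * h x)
      = H.inn f f + 2 * t * H.inn f h + t * t * H.inn h h := by
  rw [H.inn_add_left, H.inn_smul_left, inn_add_right, inn_add_right,
    inn_smul_right, inn_smul_right, H.inn_symm h f]
  ring

lemma rkhs_cauchy_schwarz (H : AbstractRKHS 𝒳 k) {f g : 𝒳 → ℝ}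
    (hf : f ∈ H.carrier) (hg : g ∈ H.carrier) :
    (H.inn f g) ^ 2 ≤ H.inn f f * H.inn g g := by
  have key : ∀ x : ℝ, 0 ≤ H.inn g g * (x * x) + (2 * H.inn f g) * x + H.inn f f := by
    intro x
    have hm : (fun y => f y + x * g y) ∈ H.carrier :=
      H.add_mem f hf _ (H.smul_mem x g hg)
    have h0 := H.inn_nonneg _ hm
    rw [inn_expand] at h0
    linarith
  have hd := discrim_le_zero key
  rw [discrim] at hd
  nlinarith [hd]

lemma sub_mem' (H : AbstractRKHS 𝒳 k) {f g : 𝒳 → ℝ} (hf : f ∈ H.carrier) (hg : g ∈ H.carrier) :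
    (fun x => f x - g x) ∈ H.carrier := by
  refine mem_congr' (fun x => ?_) (H.add_mem f hf _ (H.smul_mem (-1) g hg))
  ring

lemma lnGamma_pzero (H : AbstractRKHS 𝒳 k) (γ : ℝ) (u : 𝒳 → ℝ)
    (hu : empPn n X u = 0) :
    empLnGamma H n X T I γ u = empLn n X T I u + γ * H.inn u u := by
  unfold empLnGamma
  rw [hu]
  simp only [sub_zero]
  norm_num

/-- The variational inequality at a minimiser. -/
lemma variational_ineq (H : AbstractRKHS 𝒳 k) (hn : 0 < n) {γ : ℝ} (hγ : 0 < γ)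
    {f g : 𝒳 → ℝ} (hf : f ∈ H.carrier) (hg : g ∈ H.carrier)
    (hPf : empPn n X f = 0) (hPg : empPn n X g = 0)
    (hmin : ∀ u ∈ H.carrier, empLnGamma H n X T I γ f ≤ empLnGamma H n X T I γ u) :
    0 ≤ empLn n X T I g - empLn n X T I f
        + 2 * γ * H.inn f (fun x => g x - f x) := by
  set h : 𝒳 → ℝ := fun x => g x - f x with hh
  have hhm : h ∈ H.carrier := sub_mem' H hg hf
  have hQh : 0 ≤ H.inn h h := H.inn_nonneg h hhm
  set C : ℝ := empLn n X T I g - empLn n X T I f + 2 * γ * H.inn f h with hC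
  set d : ℝ := γ * H.inn h h with hdd
  have hd0 : 0 ≤ d := mul_nonneg hγ.le hQh
  have hstep : ∀ t : ℝ, 0 < t → t ≤ 1 → 0 ≤ C + t * d := by
    intro t ht0 ht1
    have hum : (fun x => f x + t * h x) ∈ H.carrier :=
      H.add_mem f hf _ (H.smul_mem t h hhm)
    have hPu : empPn n X (fun x => f x + t * h x) = 0 := by
      rw [empPn_comb, hPf, hh, empPn_sub, hPf, hPg]
      ring
    have hmin' := hmin _ hum
    rw [lnGamma_pzero H γ f hPf, lnGamma_pzero H γ _ hPu, inn_expand] at hmin'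
    have hconv : empLn n X T I (fun x => f x + t * h x)
        ≤ (1 - t) * empLn n X T I f + t * empLn n X T I g := by
      have he : (fun x => f x + t * h x) = (fun x => (1 - t) * f x + t * g x) := by
        funext x; rw [hh]; ring
      rw [he]
      exact empLn_convex hn f g ht0.le ht1
    have hmain : 0 ≤ t * (C + t * d) := by
      rw [hC, hdd]
      nlinarith [hmin', hconv]
    by_contra hneg
    push_neg at hneg
    nlinarith [hmain]
  by_contra hneg
  push_neg at hneg
  set t₀ : ℝ := min 1 (-C / (2 * (d + 1))) with ht₀
  have hCpos : 0 < -C := by linarith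
  have ht₀pos : 0 < t₀ := lt_min one_pos (by positivity)
  have ht₀le : t₀ ≤ -C / (2 * (d + 1)) := min_le_right _ _
  have h1 := hstep t₀ ht₀pos (min_le_left _ _)
  have h2 : t₀ * d ≤ (-C / (2 * (d + 1))) * d :=
    mul_le_mul_of_nonneg_right ht₀le hd0
  have h3 : (-C / (2 * (d + 1))) * d ≤ -C / 2 := by
    rw [div_mul_eq_mul_div, div_le_div_iff₀ (by positivity) (by norm_num)]
    nlinarith
  linarith

lemma pn_fhat_zero (H : AbstractRKHS 𝒳 k) (hone : (fun _ : 𝒳 => (1:ℝ)) ∈ H.carrier)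
    (hn : 0 < n) {γ : ℝ} (hγ : 0 < γ) {f : 𝒳 → ℝ} (hf : f ∈ H.carrier)
    (hmin : ∀ u ∈ H.carrier, empLnGamma H n X T I γ f ≤ empLnGamma H n X T I γ u) :
    empPn n X f = 0 := by
  set a : ℝ := empPn n X f with ha
  have hmem : (fun x => f x - a) ∈ H.carrier := by
    refine mem_congr' (fun x => ?_) (H.add_mem f hf _ (H.smul_mem (-a) _ hone))
    show f x + (-a) * (1:ℝ) = f x - a
    ring
  have hmin' := hmin _ hmem
  unfold empLnGamma at hmin'
  have hP : empPn n X (fun x => f x - a) = 0 := by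
    rw [empPn_sub_const hn, ← ha, sub_self]
  rw [hP] at hmin'
  have hL : empLn n X T I (fun x => f x - a) = empLn n X T I f := by
    have he : (fun x => f x - a) = (fun x => f x + (-a)) := by funext x; ring
    rw [he, empLn_add_const hn]
  rw [hL] at hmin'
  simp only [sub_zero, ← ha] at hmin'
  have ha2 : γ * a ^ 2 ≤ 0 := by linarith
  have : a ^ 2 ≤ 0 := by
    by_contra hcon
    push_neg at hcon
    nlinarith
  have := le_antisymm this (sq_nonneg a)
  exact pow_eq_zero_iff (by norm_num) |>.mp this

end Aux

/-- Lipschitz dependence of the kernel estimator on the regularisation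
parameter: for all `γ' ≥ γ > 0`,
`‖f̂_{n,γ'} − f̂_{n,γ}‖_∞ ≤ 2√K (γ' − γ) √(log n) / γ^{3/2}` (stated pointwise). -/
theorem kernel_estimator_lipschitz_in_gamma
    (𝒳 : Type*) [MetricSpace 𝒳] [MeasurableSpace 𝒳] [BorelSpace 𝒳]
    [LocallyCompactSpace 𝒳]
    (hσc : ∀ U : Set 𝒳, IsOpen U → IsSigmaCompact U)
    (k : 𝒳 → 𝒳 → ℝ) (hker : IsKernel k) (hkcont : Continuous fun p : 𝒳 × 𝒳 => k p.1 p.2)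
    (H : AbstractRKHS 𝒳 k) (hone : (fun _ => (1 : ℝ)) ∈ H.carrier)
    (K : ℝ) (hK : IsLUB (Set.range fun x => k x x) K)
    (n : ℕ) (hn : 2 ≤ n) (X : Fin n → 𝒳) (T : Fin n → ℝ) (I : Fin n → Bool)
    (hT : ∀ i, 0 < T i)
    (fhat : ℝ → 𝒳 → ℝ)
    (hfhat : ∀ γ : ℝ, 0 < γ → fhat γ ∈ H.carrier ∧
      ∀ g ∈ H.carrier, empLnGamma H n X T I γ (fhat γ) ≤ empLnGamma H n X T I γ g) :
    ∀ γ γ' : ℝ, 0 < γ → γ ≤ γ' → ∀ x : 𝒳,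
      |fhat γ' x - fhat γ x| ≤
        2 * Real.sqrt K * (γ' - γ) * Real.sqrt (Real.log n) / γ ^ ((3 : ℝ) / 2) := by
  intro γ γ' hγ hγγ' x
  have hγ' : 0 < γ' := lt_of_lt_of_le hγ hγγ'
  have hn0 : 0 < n := lt_of_lt_of_le two_pos hn
  obtain ⟨hfmem, hfmin⟩ := hfhat γ hγ
  obtain ⟨hgmem, hgmin⟩ := hfhat γ' hγ'
  set f : 𝒳 → ℝ := fhat γ with hfdef
  set g : 𝒳 → ℝ := fhat γ' with hgdef
  have hPf : empPn n X f = 0 := pn_fhat_zero H hone hn0 hγ hfmem hfmin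
  have hPg : empPn n X g = 0 := pn_fhat_zero H hone hn0 hγ' hgmem hgmin
  set h : 𝒳 → ℝ := fun y => g y - f y with hh
  have hhm : h ∈ H.carrier := sub_mem' H hgmem hfmem
  set Qf := H.inn f f with hQfdef
  set Qh := H.inn h h with hQhdef
  have hQf0 : 0 ≤ Qf := H.inn_nonneg f hfmem
  have hQh0 : 0 ≤ Qh := H.inn_nonneg h hhm
  -- Step (i): `γ Qf ≤ log n`.
  have hstep1 : γ * Qf ≤ Real.log n := by
    have h0 := hfmin _ H.zero_mem
    have hLn0 : empLnGamma H n X T I γ (fun _ => (0:ℝ))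
        = empLn n X T I (fun _ => (0:ℝ)) := by
      rw [lnGamma_pzero H γ _ empPn_zero, inn_zero_left, mul_zero, add_zero]
    rw [hLn0, lnGamma_pzero H γ f hPf] at h0
    have h1 := empLn_zero_le (X := X) (T := T) (I := I) hn0
    have h2 := empLn_lower (X := X) (T := T) (I := I) hn0 f
    linarith
  -- Step (ii): variational inequalities.
  have v1 := variational_ineq H hn0 hγ hfmem hgmem hPf hPg hfmin
  have v2 := variational_ineq H hn0 hγ' hgmem hfmem hPg hPf hgmin
  rw [← hh] at v1
  have e2 : (fun y : 𝒳 => f y - g y) = (fun y => (-1 : ℝ) * h y) := by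
    funext y
    show f y - g y = -1 * (g y - f y)
    ring
  rw [e2, inn_smul_right] at v2
  have e3 : H.inn g h = H.inn f h + Qh := by
    have e4 : (fun y => f y + h y) = g := by
      funext y
      show f y + (g y - f y) = g y
      ring
    rw [← e4, H.inn_add_left, hQhdef]
  rw [e3] at v2
  have hkeylin : γ' * Qh ≤ (γ - γ') * H.inn f h := by linarith
  have hcs := rkhs_cauchy_schwarz H hfmem hhm
  have habs : |H.inn f h| ≤ Real.sqrt Qf * Real.sqrt Qh := by
    rw [← Real.sqrt_sq_eq_abs, ← Real.sqrt_mul hQf0]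
    exact Real.sqrt_le_sqrt hcs
  have hkey : γ' * Qh ≤ (γ' - γ) * (Real.sqrt Qf * Real.sqrt Qh) := by
    have hmono := mul_le_mul_of_nonneg_left (neg_le_abs (H.inn f h))
      (sub_nonneg.mpr hγγ')
    have hmono2 := mul_le_mul_of_nonneg_left habs (sub_nonneg.mpr hγγ')
    nlinarith
  -- Pointwise bound via the reproducing property.
  have hxx : k x x ≤ K := hK.1 ⟨x, rfl⟩
  have hhx : (h x) ^ 2 ≤ Qh * K := by
    have hcs2 := rkhs_cauchy_schwarz H hhm (H.kernel_mem x)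
    rw [H.reproducing h hhm x] at hcs2
    have hk2 : H.inn (fun y => k y x) (fun y => k y x) = k x x :=
      H.reproducing _ (H.kernel_mem x) x
    rw [hk2] at hcs2
    calc (h x) ^ 2 ≤ Qh * k x x := hcs2
      _ ≤ Qh * K := mul_le_mul_of_nonneg_left hxx hQh0
  have habsx : |h x| ≤ Real.sqrt Qh * Real.sqrt K := by
    rw [← Real.sqrt_sq_eq_abs, ← Real.sqrt_mul hQh0]
    exact Real.sqrt_le_sqrt hhx
  have hqsg : Real.sqrt Qf * Real.sqrt γ ≤ Real.sqrt (Real.log n) := by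
    have hQfγ : Qf * γ ≤ Real.log n := by nlinarith
    calc Real.sqrt Qf * Real.sqrt γ = Real.sqrt (Qf * γ) := (Real.sqrt_mul hQf0 γ).symm
      _ ≤ Real.sqrt (Real.log n) := Real.sqrt_le_sqrt hQfγ
  have hrpow : γ ^ ((3:ℝ)/2) = γ * Real.sqrt γ := by
    rw [show (3:ℝ)/2 = 1 + 1/2 by norm_num, Real.rpow_add hγ, Real.rpow_one,
      ← Real.sqrt_eq_rpow]
  have hgoal : fhat γ' x - fhat γ x = h x := rfl
  rw [hgoal, hrpow]
  rcases eq_or_lt_of_le hQh0 with hq0 | hqpos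
  · have hs0 : Real.sqrt Qh = 0 := by rw [← hq0, Real.sqrt_zero]
    rw [hs0, zero_mul] at habsx
    have hRHS : 0 ≤ 2 * Real.sqrt K * (γ' - γ) * Real.sqrt (Real.log n)
        / (γ * Real.sqrt γ) := by
      refine div_nonneg ?_ (by positivity)
      exact mul_nonneg (mul_nonneg (mul_nonneg (by norm_num) (Real.sqrt_nonneg _))
        (sub_nonneg.mpr hγγ')) (Real.sqrt_nonneg _)
    linarith
  · have hs0 : 0 < Real.sqrt Qh := Real.sqrt_pos.mpr hqpos
    have h5 : γ' * Real.sqrt Qh ≤ (γ' - γ) * Real.sqrt Qf := by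
      have hmm : (γ' * Real.sqrt Qh) * Real.sqrt Qh
          ≤ ((γ' - γ) * Real.sqrt Qf) * Real.sqrt Qh := by
        calc (γ' * Real.sqrt Qh) * Real.sqrt Qh = γ' * Qh := by
              rw [mul_assoc, Real.mul_self_sqrt hQh0]
          _ ≤ (γ' - γ) * (Real.sqrt Qf * Real.sqrt Qh) := hkey
          _ = ((γ' - γ) * Real.sqrt Qf) * Real.sqrt Qh := by ring
      exact le_of_mul_le_mul_right hmm hs0
    rw [le_div_iff₀ (show (0:ℝ) < γ * Real.sqrt γ by positivity)]
    have hsr0 : 0 ≤ Real.sqrt Qh * Real.sqrt K := by positivity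
    calc |h x| * (γ * Real.sqrt γ)
        ≤ (Real.sqrt Qh * Real.sqrt K) * (γ * Real.sqrt γ) :=
          mul_le_mul_of_nonneg_right habsx (by positivity)
      _ ≤ (Real.sqrt Qh * Real.sqrt K) * (γ' * Real.sqrt γ) :=
          mul_le_mul_of_nonneg_left
            (mul_le_mul_of_nonneg_right hγγ' (Real.sqrt_nonneg γ)) hsr0
      _ = (γ' * Real.sqrt Qh) * (Real.sqrt K * Real.sqrt γ) := by ring
      _ ≤ ((γ' - γ) * Real.sqrt Qf) * (Real.sqrt K * Real.sqrt γ) :=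
          mul_le_mul_of_nonneg_right h5 (by positivity)
      _ = ((γ' - γ) * Real.sqrt K) * (Real.sqrt Qf * Real.sqrt γ) := by ring
      _ ≤ ((γ' - γ) * Real.sqrt K) * Real.sqrt (Real.log n) :=
          mul_le_mul_of_nonneg_left hqsg
            (mul_nonneg (sub_nonneg.mpr hγγ') (Real.sqrt_nonneg K))
      _ ≤ 2 * Real.sqrt K * (γ' - γ) * Real.sqrt (Real.log n) := by
          have h9 : 0 ≤ Real.sqrt K * ((γ' - γ) * Real.sqrt (Real.log n)) :=
            mul_nonneg (Real.sqrt_nonneg K)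
              (mul_nonneg (sub_nonneg.mpr hγγ') (Real.sqrt_nonneg _))
          nlinarith [h9]
end
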